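/- arXiv:1612.01712 — 7 statements merged into one kernel-verified Lean document; each statement's English description precedes it below -/
import Mathlib

section
/- Let f(x) = a_n x^n + ... + a_1 x + a_0 be a polynomial with integer coefficients satisfying 0 < a_0 ≤ a_1 ≤ ... ≤ a_{k-1} < a_k < a_{k+1} ≤ ... ≤ a_{n-1} ≤ a_n for some k with 0 ≤ k ≤ n-1. Then every complex zero α of f satisfies |α| < 1. -/
/-!
Multiplying `f` by `x - 1` gives `a n * α ^ (n + 1) = ∑ i ≤ n, c i * α ^ i`, where the
increments `c i = a i - a (i - 1)` (with `a (-1) = 0`) are nonnegative and sum to `a n`.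
If `‖α‖ ≥ 1`, the triangle inequality forces `‖α‖ = 1` together with equality, and equality
in a convex combination of points of the unit circle means `α ^ i = α ^ (n + 1)` whenever
`c i > 0`. As `c k` and `c (k + 1)` are positive, `α ^ k = α ^ (k + 1)`, so `α = 1`;
but `f 1 > 0`.
-/

open Polynomial Finset

def coeffStep {R : Type*} [Sub R] (a : ℕ → R) : ℕ → R
  | 0 => a 0
  | i + 1 => a (i + 1) - a i

section CommRing

variable {R : Type*} [CommRing R]

theorem sum_range_succ_coeffStep (a : ℕ → R) (n : ℕ) :
    ∑ i ∈ range (n + 1), coeffStep a i = a n := by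
  induction n with
  | zero => simp [coeffStep]
  | succ n ih => rw [sum_range_succ, ih, coeffStep]; ring

theorem sub_one_mul_sum_range_mul_pow (a : ℕ → R) (x : R) (n : ℕ) :
    (x - 1) * ∑ i ∈ range (n + 1), a i * x ^ i
      = a n * x ^ (n + 1) - ∑ i ∈ range (n + 1), coeffStep a i * x ^ i := by
  induction n with
  | zero => simp [coeffStep]; ring
  | succ n ih =>
    rw [sum_range_succ, mul_add, ih, sum_range_succ _ (n + 1), coeffStep]
    ring

theorem coeffStep_map {S : Type*} [CommRing S] (f : R →+* S) (a : ℕ → R) (i : ℕ) :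
    coeffStep (fun j => f (a j)) i = f (coeffStep a i) := by
  cases i <;> simp [coeffStep]

end CommRing

theorem coeffStep_nonneg {a : ℕ → ℝ} {n : ℕ} (h0 : 0 ≤ a 0)
    (hmono : ∀ i < n, a i ≤ a (i + 1)) : ∀ i ≤ n, 0 ≤ coeffStep a i
  | 0, _ => h0
  | i + 1, hi => sub_nonneg.2 (hmono i hi)

theorem Complex.eq_one_of_re_eq_one {z : ℂ} (hz : ‖z‖ ≤ 1) (hre : z.re = 1) : z = 1 := by
  have hnorm : ‖z‖ = 1 := le_antisymm hz (hre ▸ z.re_le_norm)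
  have him : z.im = 0 := Complex.abs_re_eq_norm.1 (by rw [hre, hnorm, abs_one])
  exact Complex.ext hre him

theorem eq_one_of_sum_mul_eq_sum {ι : Type*} {s : Finset ι} {c : ι → ℝ} {z : ι → ℂ}
    (hc : ∀ i ∈ s, 0 ≤ c i) (hz : ∀ i ∈ s, ‖z i‖ ≤ 1)
    (h : ∑ i ∈ s, (c i : ℂ) * z i = ∑ i ∈ s, c i) {i : ι} (hi : i ∈ s) (hci : 0 < c i) :
    z i = 1 := by
  have hle : ∀ j ∈ s, c j * (z j).re ≤ c j := fun j hj =>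
    mul_le_of_le_one_right (hc j hj) ((z j).re_le_norm.trans (hz j hj))
  have hsum : ∑ j ∈ s, c j * (z j).re = ∑ j ∈ s, c j := by
    simpa [Complex.re_sum] using congrArg Complex.re h
  have hre : c i * (z i).re = c i := (sum_eq_sum_iff_of_le hle).1 hsum i hi
  exact Complex.eq_one_of_re_eq_one (hz i hi) ((mul_eq_left₀ hci.ne').1 hre)

section EnestromKakeya

variable {c : ℕ → ℝ} {n : ℕ} {α : ℂ}

theorem norm_le_one_of_sum_mul_pow_succ_eq (hc : ∀ i ∈ range (n + 1), 0 ≤ c i)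
    (hpos : 0 < ∑ i ∈ range (n + 1), c i)
    (h : ((∑ i ∈ range (n + 1), c i : ℝ) : ℂ) * α ^ (n + 1) =
      ∑ i ∈ range (n + 1), (c i : ℂ) * α ^ i) :
    ‖α‖ ≤ 1 := by
  by_contra! hr
  set A := ∑ i ∈ range (n + 1), c i
  have hbound : A * ‖α‖ ^ (n + 1) ≤ A * ‖α‖ ^ n :=
    calc A * ‖α‖ ^ (n + 1) = ‖∑ i ∈ range (n + 1), (c i : ℂ) * α ^ i‖ := by
          rw [← h, norm_mul, norm_pow, Complex.norm_real, Real.norm_of_nonneg hpos.le]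
      _ ≤ ∑ i ∈ range (n + 1), c i * ‖α‖ ^ i := by
          refine (norm_sum_le _ _).trans_eq (sum_congr rfl fun i hi => ?_)
          rw [norm_mul, norm_pow, Complex.norm_real, Real.norm_of_nonneg (hc i hi)]
      _ ≤ ∑ i ∈ range (n + 1), c i * ‖α‖ ^ n :=
          sum_le_sum fun i hi => mul_le_mul_of_nonneg_left
            (pow_le_pow_right₀ hr.le (Nat.lt_succ_iff.1 (mem_range.1 hi))) (hc i hi)
      _ = A * ‖α‖ ^ n := by rw [sum_mul]
  have hgrow : ‖α‖ ^ n < ‖α‖ ^ (n + 1) := pow_lt_pow_right₀ hr n.lt_succ_self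
  exact (mul_lt_mul_of_pos_left hgrow hpos).not_ge hbound

theorem pow_eq_pow_succ_of_sum_mul_pow_succ_eq (hc : ∀ i ∈ range (n + 1), 0 ≤ c i)
    (hα : ‖α‖ = 1)
    (h : ((∑ i ∈ range (n + 1), c i : ℝ) : ℂ) * α ^ (n + 1) =
      ∑ i ∈ range (n + 1), (c i : ℂ) * α ^ i)
    {i : ℕ} (hi : i ∈ range (n + 1)) (hci : 0 < c i) : α ^ i = α ^ (n + 1) := by
  have hne : α ^ (n + 1) ≠ 0 := pow_ne_zero _ (norm_ne_zero_iff.1 (hα ▸ one_ne_zero))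
  have hz : ∀ j ∈ range (n + 1), ‖α ^ j / α ^ (n + 1)‖ ≤ 1 := fun j _ => by
    rw [norm_div, norm_pow, norm_pow, hα, one_pow, one_pow, div_one]
  have hsum : ∑ j ∈ range (n + 1), (c j : ℂ) * (α ^ j / α ^ (n + 1)) =
      ∑ j ∈ range (n + 1), c j := by
    simp only [mul_div_assoc', ← sum_div, ← h, mul_div_cancel_right₀ _ hne,
      Complex.ofReal_sum]
  exact (div_eq_one_iff_eq hne).1 (eq_one_of_sum_mul_eq_sum hc hz hsum hi hci)

end EnestromKakeya

theorem norm_lt_one_of_sum_mul_pow_eq_zero {n k : ℕ} {a : ℕ → ℝ} (hk : k < n) (h0 : 0 < a 0)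
    (hmono : ∀ i < n, a i ≤ a (i + 1)) (hstrict1 : 0 < k → a (k - 1) < a k)
    (hstrict2 : a k < a (k + 1)) {α : ℂ}
    (hα : ∑ i ∈ range (n + 1), (a i : ℂ) * α ^ i = 0) :
    ‖α‖ < 1 := by
  have hc : ∀ i ∈ range (n + 1), 0 ≤ coeffStep a i := fun i hi =>
    coeffStep_nonneg h0.le hmono i (Nat.lt_succ_iff.1 (mem_range.1 hi))
  have hpos : 0 < ∑ i ∈ range (n + 1), coeffStep a i :=
    h0.trans_le (single_le_sum hc (mem_range.2 n.succ_pos))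
  have hid : ((∑ i ∈ range (n + 1), coeffStep a i : ℝ) : ℂ) * α ^ (n + 1)
      = ∑ i ∈ range (n + 1), ((coeffStep a i : ℝ) : ℂ) * α ^ i := by
    have hmap : ∀ i, coeffStep (fun j => (a j : ℂ)) i = ((coeffStep a i : ℝ) : ℂ) :=
      coeffStep_map Complex.ofRealHom a
    have := sub_one_mul_sum_range_mul_pow (fun i => (a i : ℂ)) α n
    simp only [hα, mul_zero, hmap] at this
    rw [sum_range_succ_coeffStep]
    exact (sub_eq_zero.1 this.symm)
  by_contra! hge
  have hnorm : ‖α‖ = 1 := le_antisymm (norm_le_one_of_sum_mul_pow_succ_eq hc hpos hid) hge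
  have hck : 0 < coeffStep a k := by
    cases k with
    | zero => exact h0
    | succ j => exact sub_pos.2 (hstrict1 j.succ_pos)
  have hpow_k : α ^ k = α ^ (n + 1) :=
    pow_eq_pow_succ_of_sum_mul_pow_succ_eq hc hnorm hid (mem_range.2 (by omega)) hck
  have hpow_succ_k : α ^ (k + 1) = α ^ (n + 1) :=
    pow_eq_pow_succ_of_sum_mul_pow_succ_eq hc hnorm hid (mem_range.2 (by omega))
      (sub_pos.2 hstrict2)
  have hα0 : α ≠ 0 := norm_ne_zero_iff.1 (hnorm ▸ one_ne_zero)
  have hα1 : α = 1 :=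
    (mul_eq_left₀ (pow_ne_zero k hα0)).1 (by rw [← pow_succ, hpow_succ_k, hpow_k])
  have ha : ∀ i ≤ n, 0 ≤ a i := fun i hi => by
    rw [← sum_range_succ_coeffStep a i]
    exact sum_nonneg fun j hj => hc j (mem_range.2 ((mem_range.1 hj).trans_le (by omega)))
  have hsum : ∑ i ∈ range (n + 1), a i = 0 := by
    exact_mod_cast (by simpa [hα1] using hα : ∑ i ∈ range (n + 1), (a i : ℂ) = 0)
  refine hsum.not_gt (sum_pos' (fun i hi => ha i ?_) ⟨0, by simp, h0⟩)
  exact Nat.lt_succ_iff.1 (mem_range.1 hi)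

theorem stmt_0 (n k : ℕ) (a : ℕ → ℤ) (hn : 1 ≤ n) (hk : k ≤ n - 1)
    (h0 : 0 < a 0)
    (hmono : ∀ i, i < n → a i ≤ a (i + 1))
    (hstrict1 : 0 < k → a (k - 1) < a k)
    (hstrict2 : a k < a (k + 1))
    (α : ℂ)
    (hα : Polynomial.aeval α (∑ i ∈ Finset.range (n + 1), Polynomial.C (a i) * Polynomial.X ^ i) = 0) :
    ‖α‖ < 1 := by
  refine norm_lt_one_of_sum_mul_pow_eq_zero (a := fun i => (a i : ℝ)) (show k < n by omega)
    (by exact_mod_cast h0) (fun i hi => by exact_mod_cast hmono i hi)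
    (fun hk => by exact_mod_cast hstrict1 hk) (by exact_mod_cast hstrict2) ?_
  simpa using hα
end

section
/- Let f ∈ ℤ[x] be a nonconstant polynomial all of whose complex zeros lie in the open unit disc {z ∈ ℂ : |z| < 1}. If m is an integer with |m| ≥ 2 such that |f(m)| is prime, then f is irreducible in ℤ[x]. -/
/-!
If `f = a * b` with `a` and `b` non-units, then `|f(m)| = |a(m)| |b(m)|` and neither factor is `±1`:
a constant non-unit factor is an integer other than `±1`, and a nonconstant factor `g` has
`|g(m)| = |lc g| ∏ |m - α| > 1` over its roots `α`, each of which lies in the unit disc and hence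
at distance more than `1` from `m`. So `|f(m)|` is not prime.
-/

open Polynomial

namespace Polynomial

theorem norm_leadingCoeff_lt_norm_eval {p : ℂ[X]} (hp : 0 < p.natDegree)
    (hroots : ∀ a ∈ p.roots, ‖a‖ < 1) {z : ℂ} (hz : 2 ≤ ‖z‖) :
    ‖p.leadingCoeff‖ < ‖p.eval z‖ := by
  have hfar : ∀ a ∈ p.roots, 1 < ‖z - a‖ := fun a ha => by
    linarith [hroots a ha, norm_sub_norm_le z a]
  have hp0 : p ≠ 0 := ne_zero_of_natDegree_gt hp
  obtain ⟨a₀, ha₀⟩ := Complex.exists_root (natDegree_pos_iff_degree_pos.mp hp)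
  obtain ⟨t, ht⟩ := Multiset.exists_cons_of_mem ((mem_roots hp0).mpr ha₀)
  have hrest : 1 ≤ ‖(t.map (z - ·)).prod‖ := by
    refine Multiset.prod_induction (fun x => 1 ≤ ‖x‖) _
      (fun x y hx hy => by rw [norm_mul]; exact one_le_mul_of_one_le_of_one_le hx hy)
      (by simp) fun x hx => ?_
    obtain ⟨a, ha, rfl⟩ := Multiset.mem_map.mp hx
    exact (hfar a (ht ▸ Multiset.mem_cons_of_mem ha)).le
  rw [(IsAlgClosed.splits p).eval_eq_prod_roots, ht, Multiset.map_cons, Multiset.prod_cons,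
    norm_mul, norm_mul]
  exact lt_mul_of_one_lt_right (norm_pos_iff.mpr (leadingCoeff_ne_zero.mpr hp0))
    (one_lt_mul_of_lt_of_le (hfar a₀ (ht ▸ Multiset.mem_cons_self _ _)) hrest)

theorem one_lt_abs_eval_of_roots_norm_lt_one {g : ℤ[X]} (hg : 0 < g.natDegree)
    (hroots : ∀ α : ℂ, aeval α g = 0 → ‖α‖ < 1) {m : ℤ} (hm : 2 ≤ |m|) :
    1 < |g.eval m| := by
  have hinj : Function.Injective (Int.castRingHom ℂ) := Int.cast_injective
  have hlt := norm_leadingCoeff_lt_norm_eval (p := g.map (Int.castRingHom ℂ)) (z := m)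
    (by rwa [natDegree_map_eq_of_injective hinj])
    (fun a ha => hroots a (by simpa [aeval_def, eval_map] using isRoot_of_mem_roots ha))
    (by rw [Complex.norm_intCast]; exact_mod_cast hm)
  rw [leadingCoeff_map_of_injective hinj, eval_intCast_map, eq_intCast, eq_intCast,
    Complex.norm_intCast, Complex.norm_intCast] at hlt
  have hlc : 1 ≤ |g.leadingCoeff| :=
    Int.one_le_abs (leadingCoeff_ne_zero.mpr (ne_zero_of_natDegree_gt hg))
  exact hlc.trans_lt (by exact_mod_cast hlt)

theorem isUnit_of_isUnit_eval_of_roots_norm_lt_one {g : ℤ[X]}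
    (hroots : ∀ α : ℂ, aeval α g = 0 → ‖α‖ < 1) {m : ℤ} (hm : 2 ≤ |m|)
    (h : IsUnit (g.eval m)) : IsUnit g := by
  rcases Nat.eq_zero_or_pos g.natDegree with hdeg | hdeg
  · rw [eq_C_of_natDegree_eq_zero hdeg] at h ⊢
    simpa using h.map C
  · rw [Int.isUnit_iff_abs_eq] at h
    exact absurd h (one_lt_abs_eval_of_roots_norm_lt_one hdeg hroots hm).ne'

end Polynomial

theorem stmt_2 (f : Polynomial ℤ) (hf : 0 < f.natDegree)
    (hroots : ∀ α : ℂ, Polynomial.aeval α f = 0 → ‖α‖ < 1)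
    (m : ℤ) (hm : 2 ≤ |m|) (hp : (f.eval m).natAbs.Prime) :
    Irreducible f := by
  have hroots_dvd : ∀ g, g ∣ f → ∀ α : ℂ, aeval α g = 0 → ‖α‖ < 1 := by
    rintro g ⟨h, rfl⟩ α hα
    exact hroots α (by rw [map_mul, hα, zero_mul])
  refine ⟨not_isUnit_of_natDegree_pos f hf, fun a b hab => ?_⟩
  have hirr : Irreducible (a.eval m * b.eval m) := by
    rw [← eval_mul, ← hab]
    exact (Int.prime_iff_natAbs_prime.mpr hp).irreducible
  exact (hirr.isUnit_or_isUnit rfl).imp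
    (isUnit_of_isUnit_eval_of_roots_norm_lt_one (hroots_dvd a ⟨b, hab⟩) hm)
    (isUnit_of_isUnit_eval_of_roots_norm_lt_one (hroots_dvd b (Dvd.intro_left a hab.symm)) hm)
end

section
/- Let g ∈ ℤ[x] be a nonconstant polynomial all of whose complex zeros lie in {z ∈ ℂ : |z| > 1}. If |g(0)| is a prime number, then g is irreducible in ℤ[x]. -/
/-!
Over `ℂ`, `|g(0)| = |lc g| · ∏ |α|` over the roots `α` of `g`. For an integer polynomial of
positive degree whose roots all lie outside the closed unit disc, every factor of this product
exceeds `1` while `|lc g| ≥ 1`, so `|g(0)| > 1`. A factorisation `g = a * b` splits the prime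
`|g(0)|` as `|a(0)| · |b(0)|`, so one factor, say `a`, has `|a(0)| = 1`; since the roots of `a`
are roots of `g`, `a` must be a constant `±1`.
-/

open Polynomial

namespace Polynomial

theorem one_lt_norm_eval_zero_of_one_lt_norm_roots {K : Type*} [NormedField K] [IsAlgClosed K]
    {f : K[X]} (hf : 0 < f.natDegree) (hlc : 1 ≤ ‖f.leadingCoeff‖)
    (hroots : ∀ z ∈ f.roots, 1 < ‖z‖) : 1 < ‖f.eval 0‖ := by
  have hnorm : ‖f.eval 0‖ = ‖f.leadingCoeff‖ * (f.roots.map (‖·‖)).prod := by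
    rw [(IsAlgClosed.splits f).eval_eq_prod_roots, norm_mul, ← normHom_apply (Multiset.prod _),
      map_multiset_prod]
    simp [Multiset.map_map]
  have hne : f.roots ≠ 0 := by
    rwa [← Multiset.card_pos, IsAlgClosed.card_roots_eq_natDegree]
  have hprod : 1 < (f.roots.map (‖·‖)).prod := by
    simpa using Multiset.prod_map_lt_prod_map hne (fun _ ↦ 1) (‖·‖) (by simp) hroots
  rw [hnorm]
  exact one_lt_mul_of_le_of_lt hlc hprod

theorem one_lt_natAbs_eval_zero_of_one_lt_norm_roots {f : ℤ[X]} (hf : 0 < f.natDegree)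
    (hroots : ∀ z : ℂ, aeval z f = 0 → 1 < ‖z‖) : 1 < (f.eval 0).natAbs := by
  have hinj := (algebraMap ℤ ℂ).injective_int
  have hf0 : f ≠ 0 := ne_zero_of_natDegree_gt hf
  have key := one_lt_norm_eval_zero_of_one_lt_norm_roots (f := f.map (algebraMap ℤ ℂ))
    (by rwa [natDegree_map_eq_of_injective hinj])
    (by
      rw [leadingCoeff_map_of_injective hinj, eq_intCast, Complex.norm_intCast]
      exact_mod_cast Int.one_le_abs (leadingCoeff_ne_zero.mpr hf0))
    (fun z hz ↦ hroots z ((mem_roots_map_of_injective hinj hf0).mp hz))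
  rw [eval_map_algebraMap, ← coeff_zero_eq_aeval_zero', coeff_zero_eq_eval_zero, eq_intCast,
    Complex.norm_intCast, ← Int.cast_abs, ← Nat.cast_natAbs] at key
  exact_mod_cast key

theorem isUnit_of_dvd_of_natAbs_eval_zero_eq_one {f g : ℤ[X]} (hfg : f ∣ g)
    (hroots : ∀ z : ℂ, aeval z g = 0 → 1 < ‖z‖) (hf : (f.eval 0).natAbs = 1) :
    IsUnit f := by
  have hdeg : f.natDegree = 0 := by
    by_contra hpos
    have hfroots : ∀ z : ℂ, aeval z f = 0 → 1 < ‖z‖ := fun z hz ↦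
      hroots z (by obtain ⟨h, rfl⟩ := hfg; simp [hz])
    have := one_lt_natAbs_eval_zero_of_one_lt_norm_roots (Nat.pos_of_ne_zero hpos) hfroots
    omega
  rw [eq_C_of_natDegree_eq_zero hdeg, coeff_zero_eq_eval_zero]
  exact (Int.isUnit_iff_natAbs_eq.mpr hf).map C

end Polynomial

theorem stmt_3 (g : Polynomial ℤ) (hg : 0 < g.natDegree)
    (hroots : ∀ α : ℂ, Polynomial.aeval α g = 0 → 1 < ‖α‖)
    (hp : (g.eval 0).natAbs.Prime) :
    Irreducible g := by
  refine ⟨not_isUnit_of_natDegree_pos g hg, fun a b hab ↦ ?_⟩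
  subst hab
  rw [eval_mul, Int.natAbs_mul, Nat.prime_mul_iff] at hp
  rcases hp with ⟨-, hb⟩ | ⟨-, ha⟩
  · exact Or.inr (isUnit_of_dvd_of_natAbs_eval_zero_eq_one (dvd_mul_left b a) hroots hb)
  · exact Or.inl (isUnit_of_dvd_of_natAbs_eval_zero_eq_one (dvd_mul_right a b) hroots ha)
end

section
/- Let f(x) = a_n x^n + ... + a_0 ∈ ℤ[x] with a_0 ≠ 0 and |a_n| > |a_{n-1}| + ... + |a_0|. If |a_n| is a prime number, then f is irreducible in ℤ[x]. -/
open Polynomial Finset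

/-!
If `|z| ≥ 1` then `|a_n z^n| = |a_n| |z|^n > ∑_{i<n} |a_i| |z|^i ≥ |∑_{i<n} a_i z^i|`, so every
complex root of `f` lies in the open unit disc. For a factorisation `f = g h` in `ℤ[X]` the leading coefficients
multiply to the prime `a_n`, so one factor, say `g`, has leading coefficient `±1`. If `g` were
not constant, `|g(0)|` would be the product of the absolute values of its roots, which are roots
of `f`, hence `|g(0)| < 1`; but `g(0)` is a nonzero integer since it divides `a_0 ≠ 0`.
-/

namespace Polynomial

theorem irreducible_of_irreducible_leadingCoeff {R : Type*} [CommSemiring R] [NoZeroDivisors R]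
    {f : R[X]} (hf : Irreducible f.leadingCoeff)
    (h : ∀ g, g ∣ f → IsUnit g.leadingCoeff → IsUnit g) : Irreducible f := by
  refine ⟨fun hu => hf.not_isUnit (hu.map leadingCoeffHom), fun g k hgk => ?_⟩
  have hlead : f.leadingCoeff = g.leadingCoeff * k.leadingCoeff := by
    rw [hgk, leadingCoeff_mul]
  exact (hf.isUnit_or_isUnit hlead).imp (h g ⟨k, hgk⟩) (h k ⟨g, hgk.trans (mul_comm g k)⟩)

section NormedField

variable {K : Type*} [NormedField K]

theorem norm_lt_one_of_sum_norm_coeff_lt_norm_leadingCoeff {p : K[X]}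
    (hdom : ∑ i ∈ range p.natDegree, ‖p.coeff i‖ < ‖p.leadingCoeff‖) {z : K} (hz : p.IsRoot z) :
    ‖z‖ < 1 := by
  by_contra! hz1
  have htop : p.leadingCoeff * z ^ p.natDegree = -∑ i ∈ range p.natDegree, p.coeff i * z ^ i := by
    have h := hz.eq_zero
    rw [eval_eq_sum_range, sum_range_succ] at h
    rw [leadingCoeff]
    linear_combination h
  have hle : ‖p.leadingCoeff‖ * ‖z‖ ^ p.natDegree
      ≤ (∑ i ∈ range p.natDegree, ‖p.coeff i‖) * ‖z‖ ^ p.natDegree :=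
    calc ‖p.leadingCoeff‖ * ‖z‖ ^ p.natDegree
        = ‖∑ i ∈ range p.natDegree, p.coeff i * z ^ i‖ := by rw [← norm_pow, ← norm_mul, htop, norm_neg]
      _ ≤ ∑ i ∈ range p.natDegree, ‖p.coeff i‖ * ‖z‖ ^ i := by
        simpa only [norm_mul, norm_pow] using norm_sum_le (range p.natDegree) fun i => p.coeff i * z ^ i
      _ ≤ ∑ i ∈ range p.natDegree, ‖p.coeff i‖ * ‖z‖ ^ p.natDegree := by
        gcongr with i hi
        exact (mem_range.mp hi).le
      _ = _ := (sum_mul ..).symm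
  exact hdom.not_ge (le_of_mul_le_mul_right hle (pow_pos (one_pos.trans_le hz1) _))

theorem norm_coeff_zero_lt_norm_leadingCoeff [IsAlgClosed K] {p : K[X]} (hp : 0 < p.natDegree)
    (hroots : ∀ z, p.IsRoot z → ‖z‖ < 1) : ‖p.coeff 0‖ < ‖p.leadingCoeff‖ := by
  have hne : p ≠ 0 := ne_zero_of_natDegree_gt hp
  have hprod : ‖p.roots.prod‖ < 1 := by
    refine Multiset.prod_induction_nonempty (‖·‖ < 1) (fun x y hx hy => ?_) ?_
      (fun z hz => hroots z (isRoot_of_mem_roots hz))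
    · rw [norm_mul]
      exact mul_lt_one_of_nonneg_of_lt_one_left (norm_nonneg x) hx hy.le
    · rw [Multiset.empty_eq_zero, ← Multiset.card_pos, IsAlgClosed.card_roots_eq_natDegree]
      exact hp
  rw [(IsAlgClosed.splits p).coeff_zero_eq_leadingCoeff_mul_prod_roots, norm_mul, norm_mul,
    norm_pow, norm_neg, norm_one, one_pow, one_mul]
  exact mul_lt_of_lt_one_right (norm_pos_iff.mpr (leadingCoeff_ne_zero.mpr hne)) hprod

end NormedField

theorem norm_lt_one_of_isRoot_map_of_sum_abs_coeff_lt {f : ℤ[X]}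
    (hdom : ∑ i ∈ range f.natDegree, |f.coeff i| < |f.leadingCoeff|) {z : ℂ}
    (hz : (f.map (Int.castRingHom ℂ)).IsRoot z) : ‖z‖ < 1 := by
  have hinj : Function.Injective (Int.castRingHom ℂ) := RingHom.injective_int _
  refine norm_lt_one_of_sum_norm_coeff_lt_norm_leadingCoeff ?_ hz
  simp only [natDegree_map_eq_of_injective hinj, coeff_map, leadingCoeff_map_of_injective hinj, eq_intCast, Complex.norm_intCast]
  exact_mod_cast hdom

theorem isUnit_of_dvd_of_sum_abs_coeff_lt {f g : ℤ[X]} (h0 : f.coeff 0 ≠ 0)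
    (hdom : ∑ i ∈ range f.natDegree, |f.coeff i| < |f.leadingCoeff|) (hg : g ∣ f)
    (hlead : IsUnit g.leadingCoeff) : IsUnit g := by
  suffices hdeg : g.natDegree = 0 by
    rw [eq_C_of_natDegree_eq_zero hdeg, isUnit_C]
    rwa [leadingCoeff, hdeg] at hlead
  by_contra hdeg
  have hinj : Function.Injective (Int.castRingHom ℂ) := RingHom.injective_int _
  have hsmall := norm_coeff_zero_lt_norm_leadingCoeff (p := g.map (Int.castRingHom ℂ))
    (by rw [natDegree_map_eq_of_injective hinj]; omega)
    fun z hz => norm_lt_one_of_isRoot_map_of_sum_abs_coeff_lt hdom (hz.dvd (map_dvd _ hg))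
  have hg0 : g.coeff 0 ≠ 0 := by
    obtain ⟨k, rfl⟩ := hg
    exact left_ne_zero_of_mul (by rwa [mul_coeff_zero] at h0)
  rw [coeff_map, leadingCoeff_map_of_injective hinj, eq_intCast, eq_intCast, Complex.norm_intCast,
    Complex.norm_intCast] at hsmall
  have hlt : |g.coeff 0| < |g.leadingCoeff| := by exact_mod_cast hsmall
  rw [Int.isUnit_iff_abs_eq.mp hlead] at hlt
  exact hg0 (Int.abs_lt_one_iff.mp hlt)

theorem coeff_sum_range_C_mul_X_pow {R : Type*} [Semiring R] (a : ℕ → R) (n i : ℕ) :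
    (∑ j ∈ range (n + 1), C (a j) * X ^ j).coeff i = if i ≤ n then a i else 0 := by
  simp only [finsetSum_coeff, coeff_C_mul_X_pow, sum_ite_eq, mem_range, Nat.lt_succ_iff]

end Polynomial

theorem stmt_5_general (n : ℕ) (a : ℕ → ℤ) (h0 : a 0 ≠ 0)
    (hdom : ∑ i ∈ Finset.range n, |a i| < |a n|)
    (hp : (a n).natAbs.Prime) :
    Irreducible (∑ i ∈ Finset.range (n + 1), Polynomial.C (a i) * Polynomial.X ^ i) := by
  set f : ℤ[X] := ∑ i ∈ range (n + 1), C (a i) * X ^ i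
  have hcoeff : ∀ i ≤ n, f.coeff i = a i := fun i hi => by
    simp only [f, coeff_sum_range_C_mul_X_pow, if_pos hi]
  have han : a n ≠ 0 := by
    rintro h
    exact Nat.not_prime_zero (by simpa [h] using hp)
  have hdeg : f.natDegree = n := by
    refine natDegree_eq_of_le_of_coeff_ne_zero ?_ (by rwa [hcoeff n le_rfl])
    refine natDegree_le_iff_coeff_eq_zero.mpr fun i hi => ?_
    simp only [f, coeff_sum_range_C_mul_X_pow, if_neg (not_le.mpr hi)]
  have hlead : f.leadingCoeff = a n := by rw [leadingCoeff, hdeg, hcoeff n le_rfl]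
  refine irreducible_of_irreducible_leadingCoeff ?_ fun g hg hu => ?_
  · rw [hlead]
    exact (Int.prime_iff_natAbs_prime.mpr hp).irreducible
  · refine isUnit_of_dvd_of_sum_abs_coeff_lt (by rwa [hcoeff 0 n.zero_le]) ?_ hg hu
    rwa [hlead, hdeg, sum_congr rfl fun i hi => by rw [hcoeff i (mem_range.mp hi).le]]

theorem stmt_5 (n : ℕ) (a : ℕ → ℤ) (hn : 1 ≤ n) (h0 : a 0 ≠ 0)
    (hdom : ∑ i ∈ Finset.range n, |a i| < |a n|)
    (hp : (a n).natAbs.Prime) :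
    Irreducible (∑ i ∈ Finset.range (n + 1), Polynomial.C (a i) * Polynomial.X ^ i) :=
  stmt_5_general n a h0 hdom hp
end

section
/- Let f(x) = a_n x^n + ... + a_0 ∈ ℚ[x] and suppose a_i ≠ 0 and a_j ≠ 0 for some 0 ≤ i < j ≤ n. Suppose Σ_{l≠t} |a_l| ≤ q^t |a_t| for some index t with 0 ≤ t ≤ n, t ≠ i, t ≠ j, and some real q with 0 < q ≤ 1. If f has a zero α ∈ ℂ with q ≤ |α| ≤ 1, then Σ_{l≠t} |a_l| = q^t |a_t| and α^{2(j-i)} = 1. -/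
/-!
Write `u l = a_l α^l`. From `f(α) = 0` we get `a_t α^t = -∑_{l ≠ t} u l`, hence
`q^t |a_t| ≤ |a_t| |α|^t = |∑_{l ≠ t} u l| ≤ ∑_{l ≠ t} |a_l| |α|^l ≤ ∑_{l ≠ t} |a_l| ≤ q^t |a_t|`,
so every inequality is an equality. Equality `|a_j| |α|^j = |a_j|` with `j ≥ 1` forces `|α| = 1`,
and equality in the triangle inequality puts `u i` and `u j` on the same ray. Since `a_i, a_j` are
real, `α^(j-i)` is then a real number of modulus one, i.e. `±1`.
-/

open Finset

theorem sameRay_of_norm_sum_eq_sum_norm {ι E : Type*} [DecidableEq ι] [NormedAddCommGroup E]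
    [NormedSpace ℝ E] [StrictConvexSpace ℝ E] {s : Finset ι} {f : ι → E}
    (h : ‖∑ l ∈ s, f l‖ = ∑ l ∈ s, ‖f l‖) {k : ι} (hk : k ∈ s) :
    SameRay ℝ (f k) (∑ l ∈ s, f l) := by
  rw [← add_sum_erase s f hk] at h ⊢
  rw [← add_sum_erase s (‖f ·‖) hk] at h
  have hrest : SameRay ℝ (f k) (∑ l ∈ s.erase k, f l) :=
    sameRay_iff_norm_add.2 <| le_antisymm (norm_add_le _ _)
      (by linarith [norm_sum_le (s.erase k) f])
  exact (SameRay.refl (f k)).add_right hrest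

theorem sameRay_of_mem_of_norm_sum_eq_sum_norm {ι E : Type*} [DecidableEq ι]
    [NormedAddCommGroup E] [NormedSpace ℝ E] [StrictConvexSpace ℝ E] {s : Finset ι} {f : ι → E}
    (h : ‖∑ l ∈ s, f l‖ = ∑ l ∈ s, ‖f l‖) {i j : ι} (hi : i ∈ s) (hj : j ∈ s) (hfi : f i ≠ 0) :
    SameRay ℝ (f i) (f j) := by
  have hsum : ∑ l ∈ s, f l ≠ 0 := by
    intro h0
    have : ‖f i‖ ≤ ‖∑ l ∈ s, f l‖ := h ▸ single_le_sum (f := (‖f ·‖)) (by simp) hi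
    exact hfi (norm_le_zero_iff.1 (by simpa [h0] using this))
  exact (sameRay_of_norm_sum_eq_sum_norm h hi).trans (sameRay_of_norm_sum_eq_sum_norm h hj).symm
    fun h0 => absurd h0 hsum

theorem norm_sum_eq_of_dominant_of_root {𝕜 : Type*} [NormedDivisionRing 𝕜] {s : Finset ℕ}
    {t : ℕ} {b : ℕ → 𝕜} {z : 𝕜} {q : ℝ}
    (hq : 0 ≤ q) (hqz : q ≤ ‖z‖) (hz : ‖z‖ ≤ 1)
    (hdom : ∑ l ∈ s, ‖b l‖ ≤ q ^ t * ‖b t‖)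
    (hroot : b t * z ^ t + ∑ l ∈ s, b l * z ^ l = 0) :
    ∑ l ∈ s, ‖b l‖ = q ^ t * ‖b t‖ ∧
      ‖∑ l ∈ s, b l * z ^ l‖ = ∑ l ∈ s, ‖b l * z ^ l‖ ∧
      ∀ l ∈ s, ‖b l * z ^ l‖ = ‖b l‖ := by
  have hterm : ∀ l ∈ s, ‖b l * z ^ l‖ ≤ ‖b l‖ := fun l _ => by
    rw [norm_mul, norm_pow]
    exact mul_le_of_le_one_right (norm_nonneg _) (pow_le_one₀ (norm_nonneg z) hz)
  have htriangle : ‖∑ l ∈ s, b l * z ^ l‖ ≤ ∑ l ∈ s, ‖b l * z ^ l‖ := norm_sum_le _ _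
  have hterms : ∑ l ∈ s, ‖b l * z ^ l‖ ≤ ∑ l ∈ s, ‖b l‖ := sum_le_sum hterm
  have hlead : q ^ t * ‖b t‖ ≤ ‖∑ l ∈ s, b l * z ^ l‖ :=
    calc q ^ t * ‖b t‖ ≤ ‖z‖ ^ t * ‖b t‖ := by gcongr
      _ = ‖b t * z ^ t‖ := by rw [norm_mul, norm_pow, mul_comm]
      _ = ‖∑ l ∈ s, b l * z ^ l‖ := by rw [eq_neg_of_add_eq_zero_left hroot, norm_neg]
  exact ⟨by linarith, by linarith, (sum_eq_sum_iff_of_le hterm).1 (by linarith)⟩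

theorem norm_eq_one_of_norm_mul_pow_eq {𝕜 : Type*} [NormedDivisionRing 𝕜] {b z : 𝕜} {j : ℕ}
    (hb : b ≠ 0) (hj : j ≠ 0) (h : ‖b * z ^ j‖ = ‖b‖) : ‖z‖ = 1 := by
  rw [norm_mul, norm_pow, mul_eq_left₀ (norm_ne_zero_iff.2 hb)] at h
  exact (pow_eq_one_iff_of_nonneg (norm_nonneg z) hj).1 h

theorem pow_two_mul_sub_eq_one_of_sameRay {z : ℂ} (hz : ‖z‖ = 1) {x y : ℝ} (hx : x ≠ 0)
    (hy : y ≠ 0) {i j : ℕ} (hij : i ≤ j) (h : SameRay ℝ (x * z ^ i) (y * z ^ j)) :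
    z ^ (2 * (j - i)) = 1 := by
  have hz0 : z ≠ 0 := norm_ne_zero_iff.1 (by simp [hz])
  obtain ⟨r, -, hr⟩ := h.exists_pos_left (by simp [hx, hz0]) (by simp [hy, hz0])
  have hreal : y * z ^ (j - i) = r * x := by
    rw [Complex.real_smul, ← Nat.sub_add_cancel hij, pow_add] at hr
    exact mul_right_cancel₀ (pow_ne_zero i hz0) (by linear_combination -hr)
  set c : ℝ := r * x / y
  have hc : z ^ (j - i) = c := by
    simp only [c, Complex.ofReal_div, Complex.ofReal_mul]
    rw [eq_div_iff (by exact_mod_cast hy), mul_comm, hreal]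
  have hc1 : |c| = 1 := by
    rw [← Real.norm_eq_abs, ← Complex.norm_real, ← hc, norm_pow, hz, one_pow]
  rw [mul_comm, pow_mul, hc, ← Complex.ofReal_pow, ← sq_abs, hc1, one_pow, Complex.ofReal_one]

theorem stmt_10_general (n i j t : ℕ) (a : ℕ → ℚ) (q : ℝ)
    (hij : i < j) (hjn : j ≤ n) (htn : t ≤ n)
    (hi : a i ≠ 0) (hj : a j ≠ 0) (hti : t ≠ i) (htj : t ≠ j)
    (hq0 : 0 < q)
    (hineq : ∑ l ∈ (Finset.range (n + 1)).erase t, (|a l| : ℝ) ≤ q ^ t * (|a t| : ℝ))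
    (α : ℂ)
    (hα : Polynomial.aeval α (∑ l ∈ Finset.range (n + 1), Polynomial.C (a l) * Polynomial.X ^ l) = 0)
    (hαlb : q ≤ ‖α‖) (hαub : ‖α‖ ≤ 1) :
    (∑ l ∈ (Finset.range (n + 1)).erase t, (|a l| : ℝ) = q ^ t * (|a t| : ℝ)) ∧
      α ^ (2 * (j - i)) = 1 := by
  set s := (range (n + 1)).erase t
  have hcoeff : ∀ l, |(a l : ℝ)| = ‖((a l : ℝ) : ℂ)‖ := fun l => by
    rw [Complex.norm_real, Real.norm_eq_abs]
  have hroot : ((a t : ℝ) : ℂ) * α ^ t + ∑ l ∈ s, ((a l : ℝ) : ℂ) * α ^ l = 0 := by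
    rw [add_sum_erase _ (fun l => ((a l : ℝ) : ℂ) * α ^ l) (by simp only [mem_range]; omega)]
    simpa using hα
  simp only [hcoeff] at hineq ⊢
  obtain ⟨hsum, hnorm, hterm⟩ := norm_sum_eq_of_dominant_of_root hq0.le hαlb hαub hineq hroot
  have his : i ∈ s := by simp only [s, mem_erase, mem_range]; omega
  have hjs : j ∈ s := by simp only [s, mem_erase, mem_range]; omega
  have hai : (a i : ℝ) ≠ 0 := Rat.cast_ne_zero.2 hi
  have haj : (a j : ℝ) ≠ 0 := Rat.cast_ne_zero.2 hj
  have hα1 : ‖α‖ = 1 := norm_eq_one_of_norm_mul_pow_eq (Complex.ofReal_ne_zero.2 haj)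
    (by omega) (hterm j hjs)
  have hα0 : α ≠ 0 := norm_ne_zero_iff.1 (by simp [hα1])
  refine ⟨hsum, pow_two_mul_sub_eq_one_of_sameRay hα1 hai haj hij.le ?_⟩
  exact sameRay_of_mem_of_norm_sum_eq_sum_norm hnorm his hjs
    (mul_ne_zero (Complex.ofReal_ne_zero.2 hai) (pow_ne_zero i hα0))

theorem stmt_10 (n i j t : ℕ) (a : ℕ → ℚ) (q : ℝ)
    (hij : i < j) (hjn : j ≤ n) (htn : t ≤ n)
    (hi : a i ≠ 0) (hj : a j ≠ 0) (hti : t ≠ i) (htj : t ≠ j)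
    (hq0 : 0 < q) (hq1 : q ≤ 1)
    (hineq : ∑ l ∈ (Finset.range (n + 1)).erase t, (|a l| : ℝ) ≤ q ^ t * (|a t| : ℝ))
    (α : ℂ)
    (hα : Polynomial.aeval α (∑ l ∈ Finset.range (n + 1), Polynomial.C (a l) * Polynomial.X ^ l) = 0)
    (hαlb : q ≤ ‖α‖) (hαub : ‖α‖ ≤ 1) :
    (∑ l ∈ (Finset.range (n + 1)).erase t, (|a l| : ℝ) = q ^ t * (|a t| : ℝ)) ∧
      α ^ (2 * (j - i)) = 1 :=
  stmt_10_general n i j t a q hij hjn htn hi hj hti htj hq0 hineq α hα hαlb hαub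
end

section
/- If 2^(2^n) + 1 is prime for some natural number n ≥ 2, then the polynomial F(x) = (2^(2^n)+1) x^n + a_{n-1} x^{n-1} + ... + a_1 x + a_0 with 1 ≤ a_0 ≤ ... ≤ a_{k-1} < a_k < a_{k+1} ≤ ... ≤ a_{n-1} ≤ 2^(2^n)+1 for some 1 ≤ k ≤ n-1 is irreducible in ℤ[x]. -/
/-!
By an Eneström–Kakeya argument every complex root of `F` lies in the open unit disc: if
`F(z) = 0` with `‖z‖ ≥ 1`, then `aₙ zⁿ⁺¹ = a₀ + ∑ (aᵢ₊₁ - aᵢ) zⁱ⁺¹` is a combination with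
nonnegative weights summing to `aₙ` of numbers of norm at most `‖z‖ⁿ⁺¹`, so equality forces
`zⁱ⁺¹ = zⁿ⁺¹` at every strict increase; two consecutive ones give `z = 1`, yet `F(1) > 0`.
In a factorisation `F = G H` over `ℤ` the prime leading coefficient makes one factor, say `G`,
have leading coefficient `±1`. If `G` were not constant, `|G(0)|` would be the product of the
norms of its roots, hence `< 1`, while `G(0)` divides `F(0) = a₀ ≠ 0`.
-/

open Polynomial Finset

theorem one_sub_mul_sum_range_succ {R : Type*} [CommRing R] (a : ℕ → R) (z : R) (n : ℕ) :
    (1 - z) * ∑ i ∈ range (n + 1), a i * z ^ i =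
      a 0 + ∑ i ∈ range n, (a (i + 1) - a i) * z ^ (i + 1) - a n * z ^ (n + 1) := by
  induction n with
  | zero => simp; ring
  | succ n ih => rw [sum_range_succ, mul_add, ih, sum_range_succ]; ring

theorem Complex.eq_one_of_norm_le_one_of_re_eq_one {w : ℂ} (hw : ‖w‖ ≤ 1) (hre : w.re = 1) :
    w = 1 := by
  have him : w.im = 0 :=
    Complex.abs_re_eq_norm.mp (by rw [hre, abs_one]; linarith [w.re_le_norm])
  exact Complex.ext hre him

theorem Complex.eq_one_of_re_sum_mul_one_sub_nonpos {ι : Type*} {s : Finset ι} {b : ι → ℝ}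
    {w : ι → ℂ} (hb : ∀ i ∈ s, 0 ≤ b i) (hw : ∀ i ∈ s, ‖w i‖ ≤ 1)
    (h : (∑ i ∈ s, b i * (1 - w i)).re ≤ 0) {i : ι} (hi : i ∈ s) (hbi : 0 < b i) : w i = 1 := by
  have hterm : ∀ i ∈ s, (b i * (1 - w i)).re = b i * (1 - (w i).re) := fun i _ => by simp
  have hnonneg : ∀ i ∈ s, 0 ≤ (b i * (1 - w i)).re := fun i hi => by
    rw [hterm i hi]
    exact mul_nonneg (hb i hi) (by linarith [(w i).re_le_norm, hw i hi])
  have hzero := (sum_eq_zero_iff_of_nonneg hnonneg).mp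
    (le_antisymm (by rwa [← Complex.re_sum]) (sum_nonneg hnonneg)) i hi
  rw [hterm i hi, mul_eq_zero] at hzero
  exact Complex.eq_one_of_norm_le_one_of_re_eq_one (hw i hi) (by
    rcases hzero with h | h
    · exact absurd h hbi.ne'
    · linarith)

theorem nonneg_of_nonneg_of_le_succ {a : ℕ → ℝ} {n : ℕ} (h0 : 0 ≤ a 0)
    (hmono : ∀ i < n, a i ≤ a (i + 1)) : ∀ i ≤ n, 0 ≤ a i := by
  intro i hi
  induction i with
  | zero => exact h0
  | succ i ih => exact (ih (by omega)).trans (hmono i (by omega))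

theorem pow_succ_eq_of_sum_mul_pow_eq_zero {a : ℕ → ℝ} {n : ℕ} (h0 : 0 ≤ a 0)
    (hmono : ∀ i < n, a i ≤ a (i + 1)) {z : ℂ}
    (hz : ∑ i ∈ range (n + 1), (a i : ℂ) * z ^ i = 0) (hz1 : 1 ≤ ‖z‖)
    {i : ℕ} (hi : i < n) (hlt : a i < a (i + 1)) : z ^ (i + 1) = z ^ (n + 1) := by
  have hzn : z ^ (n + 1) ≠ 0 := pow_ne_zero _ (norm_pos_iff.mp (by linarith))
  set w : ℕ → ℂ := fun i => z ^ i / z ^ (n + 1) with hw_def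
  have hw : ∀ i ≤ n + 1, ‖w i‖ ≤ 1 := fun i hi => by
    rw [hw_def, norm_div, norm_pow, norm_pow]
    exact div_le_one_of_le₀ (pow_le_pow_right₀ hz1 hi) (by positivity)
  have hsum : ((a 0 : ℝ) : ℂ) + ∑ i ∈ range n, ((a (i + 1) - a i : ℝ) : ℂ) = a n := by
    push_cast
    rw [sum_range_sub (fun i => (a i : ℂ))]
    ring
  have hweighted :
      (a 0 : ℂ) * w 0 + ∑ i ∈ range n, ((a (i + 1) - a i : ℝ) : ℂ) * w (i + 1) = a n := by
    have := one_sub_mul_sum_range_succ (fun i => (a i : ℂ)) z n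
    rw [hz, mul_zero] at this
    simp only [hw_def, mul_div_assoc', ← sum_div, ← add_div, pow_zero, mul_one]
    rw [div_eq_iff hzn]
    push_cast
    linear_combination -this
  have key : ∑ i ∈ range n, ((a (i + 1) - a i : ℝ) : ℂ) * (1 - w (i + 1)) =
      -(a 0 * (1 - w 0)) := by
    simp only [mul_sub, mul_one, sum_sub_distrib]
    linear_combination hsum - hweighted
  have hwi : w (i + 1) = 1 := Complex.eq_one_of_re_sum_mul_one_sub_nonpos (s := range n)
    (b := fun i => a (i + 1) - a i) (w := fun i => w (i + 1))
    (fun i hi => sub_nonneg.mpr (hmono i (mem_range.mp hi)))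
    (fun i hi => hw _ (by have := mem_range.mp hi; omega))
    (by
      rw [key, Complex.neg_re, Complex.re_ofReal_mul, neg_nonpos, Complex.sub_re, Complex.one_re]
      exact mul_nonneg h0 (by linarith [(w 0).re_le_norm, hw 0 (by omega)]))
    (mem_range.mpr hi) (sub_pos.mpr hlt)
  exact (div_eq_one_iff_eq hzn).mp hwi

theorem norm_lt_one_of_sum_mul_pow_eq_zero_s14 {a : ℕ → ℝ} {n j : ℕ} (h0 : 0 ≤ a 0)
    (hmono : ∀ i < n, a i ≤ a (i + 1)) (hj : j + 1 < n)
    (hj₁ : a j < a (j + 1)) (hj₂ : a (j + 1) < a (j + 2))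
    {z : ℂ} (hz : ∑ i ∈ range (n + 1), (a i : ℂ) * z ^ i = 0) : ‖z‖ < 1 := by
  by_contra! hz1
  have hz_one : z = 1 := by
    have h := (pow_succ_eq_of_sum_mul_pow_eq_zero h0 hmono hz hz1 (by omega) hj₁).trans
      (pow_succ_eq_of_sum_mul_pow_eq_zero h0 hmono hz hz1 hj hj₂).symm
    rw [pow_succ _ (j + 1)] at h
    exact (mul_eq_left₀ (pow_ne_zero _ (norm_pos_iff.mp (by linarith)))).mp h.symm
  subst hz_one
  have hpos : 0 < ∑ i ∈ range (n + 1), a i :=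
    sum_pos' (fun i hi => nonneg_of_nonneg_of_le_succ h0 hmono i (by grind))
      ⟨j + 1, mem_range.mpr (by omega),
        (nonneg_of_nonneg_of_le_succ h0 hmono j (by omega)).trans_lt hj₁⟩
  have : ((∑ i ∈ range (n + 1), a i : ℝ) : ℂ) = 0 := by push_cast; simpa using hz
  exact hpos.ne' (by exact_mod_cast this)

theorem Polynomial.norm_coeff_zero_lt_norm_leadingCoeff_s14 {p : ℂ[X]} (hp : 0 < p.natDegree)
    (hroots : ∀ z ∈ p.roots, ‖z‖ < 1) : ‖p.coeff 0‖ < ‖p.leadingCoeff‖ := by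
  have hlc : 0 < ‖p.leadingCoeff‖ := by
    rw [norm_pos_iff, leadingCoeff_ne_zero]
    rintro rfl
    simp at hp
  obtain ⟨r, hr⟩ : ∃ r, r ∈ p.roots :=
    Multiset.card_pos_iff_exists_mem.mp (by rwa [IsAlgClosed.card_roots_eq_natDegree])
  obtain ⟨t, ht⟩ := Multiset.exists_cons_of_mem hr
  have hprod : ‖t.prod‖ ≤ 1 :=
    calc ‖t.prod‖ = (t.map (normHom : ℂ →*₀ ℝ)).prod := map_multiset_prod normHom t
      _ ≤ 1 ^ Multiset.card t := Multiset.prod_map_le_pow_card (fun x _ => norm_nonneg x)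
          (fun x hx => (hroots x (ht ▸ Multiset.mem_cons_of_mem hx)).le)
      _ = 1 := one_pow _
  calc ‖p.coeff 0‖ = ‖p.leadingCoeff‖ * (‖r‖ * ‖t.prod‖) := by
        rw [(IsAlgClosed.splits p).coeff_zero_eq_leadingCoeff_mul_prod_roots, ht]
        simp
    _ < ‖p.leadingCoeff‖ * 1 := by
        gcongr
        exact (mul_le_of_le_one_right (norm_nonneg r) hprod).trans_lt (hroots r hr)
    _ = ‖p.leadingCoeff‖ := mul_one _

theorem Polynomial.isUnit_of_dvd_of_norm_roots_lt_one {F G : ℤ[X]} (hGF : G ∣ F)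
    (hlc : IsUnit G.leadingCoeff) (h0 : F.coeff 0 ≠ 0)
    (hroots : ∀ z : ℂ, aeval z F = 0 → ‖z‖ < 1) : IsUnit G := by
  have hG0 : G.coeff 0 ≠ 0 := by
    obtain ⟨H, rfl⟩ := hGF
    exact left_ne_zero_of_mul (mul_coeff_zero G H ▸ h0)
  suffices hdeg : G.natDegree = 0 by
    rw [eq_C_of_natDegree_eq_zero hdeg]
    exact isUnit_C.mpr (by rwa [leadingCoeff, hdeg] at hlc)
  by_contra hdeg
  have hinj : Function.Injective (algebraMap ℤ ℂ) := (algebraMap ℤ ℂ).injective_int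
  have hlt := norm_coeff_zero_lt_norm_leadingCoeff_s14 (p := G.map (algebraMap ℤ ℂ))
    (by rw [natDegree_map_eq_of_injective hinj]; omega)
    (fun z hz => hroots z (aeval_eq_zero_of_dvd_aeval_eq_zero hGF (mem_aroots.mp hz).2))
  rw [coeff_map, leadingCoeff_map_of_injective hinj] at hlt
  simp only [algebraMap_int_eq, eq_intCast, Complex.norm_intCast, ← Int.cast_abs,
    Int.cast_lt] at hlt
  exact hlt.not_ge (Int.isUnit_iff_abs_eq.mp hlc ▸ Int.one_le_abs hG0)

theorem Polynomial.irreducible_of_prime_leadingCoeff_of_norm_roots_lt_one {F : ℤ[X]}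
    (hdeg : 0 < F.natDegree) (hlc : Prime F.leadingCoeff) (h0 : F.coeff 0 ≠ 0)
    (hroots : ∀ z : ℂ, aeval z F = 0 → ‖z‖ < 1) : Irreducible F where
  not_isUnit hF := hdeg.ne' (natDegree_eq_zero_of_isUnit hF)
  isUnit_or_isUnit G H hGH := by
    rw [hGH, leadingCoeff_mul] at hlc
    exact (hlc.irreducible.isUnit_or_isUnit rfl).imp
      (fun hG => isUnit_of_dvd_of_norm_roots_lt_one ⟨H, hGH⟩ hG h0 hroots)
      (fun hH => isUnit_of_dvd_of_norm_roots_lt_one ⟨G, hGH.trans (mul_comm G H)⟩ hH h0 hroots)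

theorem Polynomial.coeff_sum_range_C_mul_X_pow_s14 {R : Type*} [Semiring R] (a : ℕ → R) (n m : ℕ) :
    (∑ i ∈ range n, C (a i) * X ^ i).coeff m = if m < n then a m else 0 := by
  simp [finsetSum_coeff]

theorem Polynomial.natDegree_sum_range_C_mul_X_pow {R : Type*} [Semiring R] {a : ℕ → R} {n : ℕ}
    (ha : a n ≠ 0) : (∑ i ∈ range (n + 1), C (a i) * X ^ i).natDegree = n :=
  natDegree_eq_of_le_of_coeff_ne_zero
    (natDegree_sum_le_of_forall_le _ _ fun i hi => (natDegree_C_mul_X_pow_le _ _).trans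
      (Nat.lt_succ_iff.mp (mem_range.mp hi)))
    (by simpa [coeff_sum_range_C_mul_X_pow_s14] using ha)

theorem stmt_14_general (n k : ℕ) (a : ℕ → ℤ)
    (hFermat : Nat.Prime (2 ^ (2 ^ n) + 1))
    (han : a n = 2 ^ (2 ^ n) + 1)
    (h0 : 1 ≤ a 0)
    (hmono : ∀ i, i < n → a i ≤ a (i + 1))
    (hk1 : 1 ≤ k) (hk2 : k ≤ n - 1)
    (hstrict1 : a (k - 1) < a k)
    (hstrict2 : a k < a (k + 1)) :
    Irreducible (∑ i ∈ Finset.range (n + 1), Polynomial.C (a i) * Polynomial.X ^ i) := by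
  have hprime : Prime (a n) := by
    rw [han]
    exact_mod_cast Nat.prime_iff_prime_int.mp hFermat
  have hdeg := natDegree_sum_range_C_mul_X_pow hprime.ne_zero
  refine irreducible_of_prime_leadingCoeff_of_norm_roots_lt_one (by omega)
    (by rwa [leadingCoeff, hdeg, coeff_sum_range_C_mul_X_pow_s14, if_pos (by omega)])
    (by rw [coeff_sum_range_C_mul_X_pow_s14, if_pos (by omega)]; omega) fun z hz => ?_
  obtain ⟨j, rfl⟩ : ∃ j, k = j + 1 := ⟨k - 1, by omega⟩
  refine norm_lt_one_of_sum_mul_pow_eq_zero_s14 (a := fun i => (a i : ℝ)) (j := j)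
    (by exact_mod_cast zero_le_one.trans h0)
    (fun i hi => by exact_mod_cast hmono i hi) (by omega) (by exact_mod_cast hstrict1)
    (by exact_mod_cast hstrict2) ?_
  simpa using hz

theorem stmt_14 (n k : ℕ) (a : ℕ → ℤ) (hn : 2 ≤ n)
    (hFermat : Nat.Prime (2 ^ (2 ^ n) + 1))
    (han : a n = 2 ^ (2 ^ n) + 1)
    (h0 : 1 ≤ a 0)
    (hmono : ∀ i, i < n → a i ≤ a (i + 1))
    (hk1 : 1 ≤ k) (hk2 : k ≤ n - 1)
    (hstrict1 : a (k - 1) < a k)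
    (hstrict2 : a k < a (k + 1)) :
    Irreducible (∑ i ∈ Finset.range (n + 1), Polynomial.C (a i) * Polynomial.X ^ i) :=
  stmt_14_general n k a hFermat han h0 hmono hk1 hk2 hstrict1 hstrict2
end

section
/- The polynomial f(x) = 2^51 x^10 + 2^10 x^9 − 2^11 x^8 + 2^15 x^7 − 2^16 x^6 − 1 is irreducible in ℤ[x]. -/
/-! If `f = g * h` in `ℤ[X]`, then `f(2) = g(2) * h(2)`, and as `f(2) = 2 ^ 61 - 1` is prime one of
`g(2)`, `h(2)` is `±1`, say `g(2)`. Since `f` has constant term `-1`, `g` is not a nonunit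
constant, so it has complex roots, all of them roots of `f`. The leading coefficient of `f`
dominates the sum of the absolute values of the others, so these roots `α` satisfy `|α| < 1`;
then `|g(2)| = |lc g| * ∏ |2 - α| > 1`, a contradiction. -/

open Polynomial Finset

theorem Multiset.one_lt_prod_of_one_lt {R : Type*} [CommSemiring R] [PartialOrder R]
    [IsStrictOrderedRing R] {s : Multiset R} (hs : s ≠ 0) (h : ∀ x ∈ s, 1 < x) :
    1 < s.prod := by
  induction s using Multiset.induction_on with
  | empty => exact absurd rfl hs
  | cons a t ih =>
    have ha : 1 < a := h a (Multiset.mem_cons_self a t)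
    rw [Multiset.prod_cons]
    rcases eq_or_ne t 0 with rfl | ht
    · simpa using ha
    · have ht' := ih ht fun x hx => h x (Multiset.mem_cons_of_mem hx)
      exact one_lt_mul_of_le_of_lt ha.le ht'

namespace Polynomial

theorem isPrimitive_of_isUnit_coeff_zero {R : Type*} [CommSemiring R] {f : R[X]}
    (hf : IsUnit (f.coeff 0)) : f.IsPrimitive :=
  fun r hr => isUnit_of_dvd_unit ((C_dvd_iff_dvd_coeff r f).mp hr 0) hf

theorem norm_lt_one_of_isRoot {K : Type*} [NormedField K] {p : K[X]}
    (hp : ∑ i ∈ range p.natDegree, ‖p.coeff i‖ < ‖p.leadingCoeff‖) {z : K} (hz : p.IsRoot z) :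
    ‖z‖ < 1 := by
  by_contra! hz1
  set n := p.natDegree
  have hlead : p.leadingCoeff * z ^ n = -∑ i ∈ range n, p.coeff i * z ^ i := by
    have := hz.eq_zero
    rw [eval_eq_sum_range, sum_range_succ] at this
    exact eq_neg_of_add_eq_zero_right this
  have hzn : 0 < ‖z‖ ^ n := pow_pos (zero_lt_one.trans_le hz1) n
  have : ‖p.leadingCoeff‖ * ‖z‖ ^ n ≤ (∑ i ∈ range n, ‖p.coeff i‖) * ‖z‖ ^ n :=
    calc ‖p.leadingCoeff‖ * ‖z‖ ^ n = ‖∑ i ∈ range n, p.coeff i * z ^ i‖ := by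
          rw [← norm_pow, ← norm_mul, hlead, norm_neg]
      _ ≤ ∑ i ∈ range n, ‖p.coeff i‖ * ‖z‖ ^ i := by
          simpa only [norm_mul, norm_pow] using norm_sum_le (range n) fun i => p.coeff i * z ^ i
      _ ≤ ∑ i ∈ range n, ‖p.coeff i‖ * ‖z‖ ^ n := by
          gcongr with i hi
          exact (mem_range.mp hi).le
      _ = (∑ i ∈ range n, ‖p.coeff i‖) * ‖z‖ ^ n := (sum_mul ..).symm
  exact (mul_lt_mul_of_pos_right hp hzn).not_ge this

theorem one_lt_norm_eval_of_roots {K : Type*} [NormedField K] [IsAlgClosed K] {p : K[X]}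
    (hp : 0 < p.natDegree) (hlc : 1 ≤ ‖p.leadingCoeff‖) {w : K}
    (hroots : ∀ a ∈ p.roots, 1 < ‖w - a‖) : 1 < ‖p.eval w‖ := by
  have hroots_ne : p.roots ≠ 0 := by
    rw [← Multiset.card_pos, IsAlgClosed.card_roots_eq_natDegree]
    exact hp
  have norm_prod (s : Multiset K) : ‖s.prod‖ = (s.map (‖·‖)).prod := map_multiset_prod normHom s
  rw [← C_leadingCoeff_mul_prod_multiset_X_sub_C (IsAlgClosed.card_roots_eq_natDegree (p := p)),
    eval_mul, eval_C, eval_multiset_prod, norm_mul, norm_prod, Multiset.map_map, Multiset.map_map]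
  refine one_lt_mul_of_le_of_lt hlc (Multiset.one_lt_prod_of_one_lt (by simpa using hroots_ne) ?_)
  simp only [Multiset.mem_map, Function.comp_apply, eval_sub, eval_X, eval_C]
  rintro _ ⟨a, ha, rfl⟩
  exact hroots a ha

theorem norm_lt_one_of_mem_aroots {f : ℤ[X]}
    (hf : ∑ i ∈ range f.natDegree, |f.coeff i| < |f.leadingCoeff|) {z : ℂ} (hz : z ∈ f.aroots ℂ) :
    ‖z‖ < 1 := by
  have hinj := (algebraMap ℤ ℂ).injective_int
  refine norm_lt_one_of_isRoot ?_ (isRoot_of_mem_roots hz)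
  simp only [natDegree_map_eq_of_injective hinj, leadingCoeff_map_of_injective hinj, coeff_map,
    eq_intCast, Complex.norm_intCast]
  exact_mod_cast hf

theorem one_lt_abs_eval_of_aroots {f : ℤ[X]} (hf : 0 < f.natDegree) {m : ℤ}
    (hroots : ∀ z ∈ f.aroots ℂ, ‖z‖ < m - 1) : 1 < |f.eval m| := by
  have hinj := (algebraMap ℤ ℂ).injective_int
  have key := one_lt_norm_eval_of_roots (p := f.map (algebraMap ℤ ℂ)) (w := m)
    (by rwa [natDegree_map_eq_of_injective hinj])
    (by
      rw [leadingCoeff_map_of_injective hinj, eq_intCast, Complex.norm_intCast]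
      exact_mod_cast Int.one_le_abs (leadingCoeff_ne_zero.mpr (ne_zero_of_natDegree_gt hf)))
    (fun a ha => calc
      1 < (m : ℝ) - ‖a‖ := by linarith [hroots a ha]
      _ ≤ ‖(m : ℂ)‖ - ‖a‖ := by rw [Complex.norm_intCast]; gcongr; exact le_abs_self _
      _ ≤ ‖(m : ℂ) - a‖ := norm_sub_norm_le _ _)
  rw [eval_intCast_map, Int.cast_id, eq_intCast, Complex.norm_intCast] at key
  exact_mod_cast key

theorem irreducible_of_prime_eval {f : ℤ[X]} (hprim : f.IsPrimitive) (hf : 0 < f.natDegree)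
    {m : ℤ} (hprime : Prime (f.eval m)) (hroots : ∀ z ∈ f.aroots ℂ, ‖z‖ < m - 1) :
    Irreducible f := by
  have unit_of_dvd : ∀ g, g ∣ f → IsUnit (g.eval m) → IsUnit g := by
    intro g hg hunit
    rcases Nat.eq_zero_or_pos g.natDegree with hg0 | hg0
    · rw [eq_C_of_natDegree_eq_zero hg0] at hg ⊢
      exact (hprim _ hg).map C
    · refine absurd (Int.isUnit_iff_abs_eq.mp hunit) (one_lt_abs_eval_of_aroots hg0 ?_).ne'
      have hf0 : f.map (algebraMap ℤ ℂ) ≠ 0 :=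
        (Polynomial.map_ne_zero_iff (algebraMap ℤ ℂ).injective_int).mpr hprim.ne_zero
      have hle := roots.le_of_dvd hf0 (map_dvd (algebraMap ℤ ℂ) hg)
      exact fun z hz => hroots z (Multiset.mem_of_le hle hz)
  refine ⟨fun hu => hf.ne' (natDegree_eq_zero_of_isUnit hu), fun a b hab => ?_⟩
  have hab_eval : f.eval m = a.eval m * b.eval m := by rw [hab, eval_mul]
  exact (hprime.irreducible.isUnit_or_isUnit hab_eval).imp
    (unit_of_dvd a (hab ▸ dvd_mul_right a b)) (unit_of_dvd b (hab ▸ dvd_mul_left b a))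

end Polynomial

theorem prime_two_pow_61_sub_one : Prime ((2 : ℤ) ^ 61 - 1) := by
  have h : (mersenne 61).Prime := lucas_lehmer_sufficiency _ (by norm_num) (by norm_num)
  rw [show (2 : ℤ) ^ 61 - 1 = (mersenne 61 : ℕ) by norm_num [mersenne]]
  exact Nat.prime_iff_prime_int.mp h

noncomputable def fPoly : ℤ[X] :=
  C (2 ^ 51) * X ^ 10 + C (2 ^ 10) * X ^ 9 - C (2 ^ 11) * X ^ 8 + C (2 ^ 15) * X ^ 7 -
    C (2 ^ 16) * X ^ 6 - 1

theorem natDegree_fPoly : fPoly.natDegree = 10 := by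
  unfold fPoly
  compute_degree!

theorem sum_abs_coeff_fPoly_lt :
    ∑ i ∈ range fPoly.natDegree, |fPoly.coeff i| < |fPoly.leadingCoeff| := by
  rw [leadingCoeff, natDegree_fPoly]
  simp [fPoly, sum_range_succ, coeff_X_pow, coeff_one]

theorem stmt_16 :
    Irreducible ((Polynomial.C (2 ^ 51) * Polynomial.X ^ 10 + Polynomial.C (2 ^ 10) * Polynomial.X ^ 9 -
      Polynomial.C (2 ^ 11) * Polynomial.X ^ 8 + Polynomial.C (2 ^ 15) * Polynomial.X ^ 7 -
      Polynomial.C (2 ^ 16) * Polynomial.X ^ 6 - 1 : Polynomial ℤ)) := by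
  show Irreducible fPoly
  refine irreducible_of_prime_eval (m := 2) (isPrimitive_of_isUnit_coeff_zero ?_)
    (by rw [natDegree_fPoly]; norm_num) ?_ fun z hz => ?_
  · simp [fPoly, coeff_one]
  · convert prime_two_pow_61_sub_one using 1
    norm_num [fPoly]
  · exact (norm_lt_one_of_mem_aroots sum_abs_coeff_fPoly_lt hz).trans_eq (by norm_num)
end
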